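/- arXiv:1509.00916 — 2 statements merged into one kernel-verified Lean document; each statement's English description precedes it below -/
import Mathlib

section
/- Let G = (V, E) be a finite simple graph, E1 ⊆ E, and let G' be obtained from G by subdividing each edge of E1 twice. If G has a vertex cover of size at most s, then G' has a vertex cover of size at most s + |E1|. -/
open SimpleGraph Finset

/-- The type of new vertices added when each edge of `E1` is subdivided twice:
for an edge `e = {u, v} ∈ E1`, the ordered pair `(u, v)` represents the new vertex
`v'_{e,u}` (the one adjacent to `u`), and `(v, u)` represents `v'_{e,v}`. -/
abbrev NewVert (V : Type*) (E1 : Finset (Sym2 V)) : Type _ :=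
  {p : V × V // s(p.1, p.2) ∈ E1 ∧ p.1 ≠ p.2}

/-- The graph `G'` obtained from `G` by subdividing each edge of `E1` twice:
an edge `e = {u, v} ∈ E1` is replaced by the path `u — v'_{e,u} — v'_{e,v} — v`,
and edges not in `E1` are kept unchanged. -/
def subdivide {V : Type*} (G : SimpleGraph V) (E1 : Finset (Sym2 V)) :
    SimpleGraph (V ⊕ NewVert V E1) where
  Adj x y :=
    match x, y with
    | Sum.inl u, Sum.inl w => G.Adj u w ∧ s(u, w) ∉ E1
    | Sum.inl u, Sum.inr p => u = p.val.1
    | Sum.inr p, Sum.inl u => u = p.val.1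
    | Sum.inr p, Sum.inr q => p.val.1 = q.val.2 ∧ p.val.2 = q.val.1
  symm := by
    constructor
    rintro (u | p) (w | q) h
    · exact ⟨h.1.symm, fun hc => h.2 (by rwa [Sym2.eq_swap] at hc)⟩
    · exact h
    · exact h
    · exact ⟨h.2.symm, h.1.symm⟩
  loopless := by
    constructor
    rintro (u | p) h
    · exact G.loopless.irrefl u h.1
    · exact p.prop.2 h.1

/-- A set `S` of vertices is a vertex cover of `G` if every edge of `G` has at
least one endpoint in `S`. -/
def IsVertexCover {W : Type*} (H : SimpleGraph W) (S : Set W) : Prop :=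
  ∀ ⦃u v : W⦄, H.Adj u v → u ∈ S ∨ v ∈ S

/-!
Let `S` be a vertex cover of `G` and pick for every `e ∈ E1` an endpoint `f e ∈ S`. On the path
`u — (u, v) — (v, u) — v` replacing `e = s(u, v)` with `f e = v`, the vertex `v` covers the last
edge and the new vertex `(u, v)`, next to the other endpoint, covers the first two. So one new
vertex per edge of `E1` suffices.
-/

theorem IsVertexCover.exists_mem_of_mem_edgeSet {W : Type*} {H : SimpleGraph W} {S : Set W}
    (hS : _root_.IsVertexCover H S) {e : Sym2 W} (he : e ∈ H.edgeSet) : ∃ w ∈ e, w ∈ S := by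
  induction e with
  | h u v =>
    rcases hS he with hu | hv
    · exact ⟨u, Sym2.mem_mk_left u v, hu⟩
    · exact ⟨v, Sym2.mem_mk_right u v, hv⟩

section Subdivide

variable {V : Type*} {G : SimpleGraph V} {E1 : Finset (Sym2 V)}

theorem isVertexCover_subdivide (S : Finset V) (T : Finset (NewVert V E1))
    (hS : _root_.IsVertexCover G S) (hleg : ∀ p : NewVert V E1, p.1.1 ∈ S ∨ p ∈ T)
    (hmid : ∀ p q : NewVert V E1, p.1.1 = q.1.2 → p.1.2 = q.1.1 → p ∈ T ∨ q ∈ T) :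
    _root_.IsVertexCover (subdivide G E1) ↑(S.disjSum T) := by
  rintro (u | p) (w | q) hadj <;> simp only [Finset.mem_coe, inl_mem_disjSum, inr_mem_disjSum]
  · exact hS hadj.1
  · obtain rfl : u = q.1.1 := hadj
    exact hleg q
  · obtain rfl : w = p.1.1 := hadj
    exact (hleg p).symm
  · exact hmid p q hadj.1 hadj.2

variable [Fintype V] [DecidableEq V]

def newVertsAwayFrom (E1 : Finset (Sym2 V)) (f : Sym2 V → V) : Finset (NewVert V E1) :=
  univ.filter fun p => f s(p.1.1, p.1.2) = p.1.2

@[simp]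
theorem mem_newVertsAwayFrom {f : Sym2 V → V} {p : NewVert V E1} :
    p ∈ newVertsAwayFrom E1 f ↔ f s(p.1.1, p.1.2) = p.1.2 := by
  simp [newVertsAwayFrom]

theorem card_newVertsAwayFrom_le (f : Sym2 V → V) : (newVertsAwayFrom E1 f).card ≤ E1.card := by
  refine card_le_card_of_injOn (fun p => s(p.1.1, p.1.2)) (fun p _ => p.2.1) ?_
  intro p hp q hq (hpq : s(p.1.1, p.1.2) = s(q.1.1, q.1.2))
  rw [mem_coe, mem_newVertsAwayFrom] at hp hq
  have hsnd : p.1.2 = q.1.2 := by rw [← hp, ← hq, hpq]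
  rcases Sym2.mk_eq_mk_iff.mp hpq with h | h
  · exact Subtype.ext (Prod.ext (congrArg Prod.fst h) hsnd)
  · exact absurd (((Prod.ext_iff.mp h).1).trans hsnd.symm) p.2.2

theorem isVertexCover_subdivide_disjSum_newVertsAwayFrom {S : Finset V}
    (hS : _root_.IsVertexCover G S) {f : Sym2 V → V} (hf : ∀ e ∈ E1, f e ∈ e ∧ f e ∈ S) :
    _root_.IsVertexCover (subdivide G E1) ↑(S.disjSum (newVertsAwayFrom E1 f)) := by
  refine isVertexCover_subdivide _ _ hS (fun p => ?_) (fun p q h1 h2 => ?_)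
  · obtain ⟨hmem, hfS⟩ := hf _ p.2.1
    rcases Sym2.mem_iff.mp hmem with h | h
    · exact Or.inl (h ▸ hfS)
    · exact Or.inr (mem_newVertsAwayFrom.mpr h)
  · have hqp : s(q.1.1, q.1.2) = s(p.1.1, p.1.2) := by rw [h1, h2, Sym2.eq_swap]
    rcases Sym2.mem_iff.mp (hf _ p.2.1).1 with h | h
    · exact Or.inr (mem_newVertsAwayFrom.mpr (by rw [hqp, h, h1]))
    · exact Or.inl (mem_newVertsAwayFrom.mpr h)

end Subdivide

/-- If `G` has a vertex cover of size at most `s`, then the graph `G'`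
obtained from `G` by subdividing each edge of `E1 ⊆ E(G)` twice has a vertex cover of
size at most `s + |E1|`. -/
theorem statement3 {V : Type*} [Fintype V] [DecidableEq V] (G : SimpleGraph V)
    [DecidableRel G.Adj] (E1 : Finset (Sym2 V)) (hE1 : E1 ⊆ G.edgeFinset) (s : ℕ)
    (hcover : ∃ S : Finset V, _root_.IsVertexCover G ↑S ∧ S.card ≤ s) :
    ∃ S' : Finset (V ⊕ NewVert V E1),
      _root_.IsVertexCover (subdivide G E1) ↑S' ∧ S'.card ≤ s + E1.card := by
  obtain ⟨S, hS, hScard⟩ := hcover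
  have hpick (e : Sym2 V) : ∃ w, e ∈ E1 → w ∈ e ∧ w ∈ S := by
    by_cases he : e ∈ E1
    · obtain ⟨w, hwe, hwS⟩ := hS.exists_mem_of_mem_edgeSet (mem_edgeFinset.mp (hE1 he))
      exact ⟨w, fun _ => ⟨hwe, hwS⟩⟩
    · exact ⟨e.out.1, fun h => absurd h he⟩
  choose f hf using hpick
  refine ⟨S.disjSum (newVertsAwayFrom E1 f),
    isVertexCover_subdivide_disjSum_newVertsAwayFrom hS hf, ?_⟩
  rw [card_disjSum]
  exact Nat.add_le_add hScard (card_newVertsAwayFrom_le f)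
end

section
/- Let G be a 4-regular finite simple graph on n vertices, let E(G) = E1 ∪ E2 be a partition of its edge set with |E1| = |E2| = n such that (V(G), E2) is bipartite, and let G' be the graph (with 3n vertices, identified with {1,…,3n}, and 4n edges) obtained from G by subdividing each edge of E1 twice. If G has a vertex cover of size at most s with s ≤ n, then, setting k = s + n, the edge set of G' admits a partition into k parts whose total cost is at most 3n − s. -/
open SimpleGraph Finset

/-- For a graph on vertex set `Fin N`, the edge `e = {i, j}` is identified with the
point `x_e = b_i + b_j` in `ℝ^N`, where `b_i` is the `i`-th standard basis vector. -/
noncomputable def edgePoint (N : ℕ) (e : Sym2 (Fin N)) : EuclideanSpace ℝ (Fin N) :=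
  Sym2.lift ⟨fun i j => EuclideanSpace.single i (1 : ℝ) + EuclideanSpace.single j (1 : ℝ),
    fun _ _ => add_comm _ _⟩ e

/-- The (k-means) cost of a finite set `C` of edges:
`cost(C) = inf_{c ∈ ℝ^N} Σ_{e ∈ C} ‖x_e − c‖²`. -/
noncomputable def cost (N : ℕ) (C : Finset (Sym2 (Fin N))) : ℝ :=
  ⨅ c : EuclideanSpace ℝ (Fin N), ∑ e ∈ C, ‖edgePoint N e - c‖ ^ 2

/-!
A vertex cover `S` of `G` gives a vertex cover of `G'` with `|S| + |E1|` vertices: on the path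
replacing `uv ∈ E1`, add the new vertex next to an endpoint outside `S` (either one if both lie in
`S`). Labelling every edge of `G'` by a cover vertex it contains splits `E(G')` into at most `s + n`
stars, and splitting stars further gives exactly `s + n` of them, as `|E(G')| ≥ 2n`. A star of `m`
edges `b_v + b_{u_i}` costs at most `m - 1` (centre it at `b_v` plus the mean of the `b_{u_i}`), so
the total cost is at most `|E(G')| - (s + n) ≤ 4n - (s + n)`.
-/

theorem sum_norm_sub_mean_sq {ι E : Type*} [NormedAddCommGroup E] [InnerProductSpace ℝ E]
    {s : Finset ι} (hs : s.Nonempty) (x : ι → E) :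
    ∑ i ∈ s, ‖x i - (#s : ℝ)⁻¹ • ∑ j ∈ s, x j‖ ^ 2
      = ∑ i ∈ s, ‖x i‖ ^ 2 - (#s : ℝ)⁻¹ * ‖∑ i ∈ s, x i‖ ^ 2 := by
  have hm : (#s : ℝ) ≠ 0 := by exact_mod_cast hs.card_pos.ne'
  simp only [norm_sub_sq_real, Finset.sum_add_distrib, Finset.sum_sub_distrib,
    ← Finset.mul_sum, ← sum_inner, Finset.sum_const, nsmul_eq_mul, real_inner_smul_right,
    norm_smul, mul_pow, real_inner_self_eq_norm_sq, Real.norm_eq_abs, sq_abs]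
  field_simp
  ring

theorem Orthonormal.sum_norm_sub_mean_sq {ι E : Type*} [NormedAddCommGroup E]
    [InnerProductSpace ℝ E] {v : ι → E} (hv : Orthonormal ℝ v) {s : Finset ι}
    (hs : s.Nonempty) :
    ∑ i ∈ s, ‖v i - (#s : ℝ)⁻¹ • ∑ j ∈ s, v j‖ ^ 2 = #s - 1 := by
  have hm : (#s : ℝ) ≠ 0 := by exact_mod_cast hs.card_pos.ne'
  have hsum : ‖∑ i ∈ s, v i‖ ^ 2 = #s := by
    rw [← real_inner_self_eq_norm_sq]
    simpa using hv.inner_sum (fun _ => 1) (fun _ => 1) s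
  rw [_root_.sum_norm_sub_mean_sq hs, hsum]
  simp only [hv.norm_eq_one, one_pow, sum_const, nsmul_eq_mul, mul_one, sub_right_inj]
  field_simp

theorem cost_le_card_sub_one {N : ℕ} {C : Finset (Sym2 (Fin N))} (hC : C.Nonempty) {v : Fin N}
    (hv : ∀ e ∈ C, v ∈ e) : cost N C ≤ #C - 1 := by
  classical
  let o : Sym2 (Fin N) → Fin N := fun e => if h : v ∈ e then Sym2.Mem.other h else v
  have ho : ∀ e ∈ C, s(v, o e) = e := fun e he => by
    simp only [o, dif_pos (hv e he)]; exact Sym2.other_spec (hv e he)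
  have hinj : Set.InjOn o C := fun e he e' he' h => by rw [← ho e he, ← ho e' he', h]
  let b : Fin N → EuclideanSpace ℝ (Fin N) := fun u => EuclideanSpace.single u 1
  let μ := (#C : ℝ)⁻¹ • ∑ e ∈ C, b (o e)
  have hbdd : BddBelow (Set.range fun c => ∑ e ∈ C, ‖edgePoint N e - c‖ ^ 2) :=
    ⟨0, by rintro _ ⟨c, rfl⟩; positivity⟩
  calc cost N C ≤ ∑ e ∈ C, ‖edgePoint N e - (b v + μ)‖ ^ 2 := ciInf_le hbdd (b v + μ)
    _ = ∑ e ∈ C, ‖b (o e) - μ‖ ^ 2 := Finset.sum_congr rfl fun e he => by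
        have hx : edgePoint N s(v, o e) = b v + b (o e) := rfl
        rw [ho e he] at hx
        rw [hx, add_sub_add_left_eq_sub]
    _ = #C - 1 := by
        have := (EuclideanSpace.orthonormal_single (𝕜 := ℝ) (ι := Fin N)).sum_norm_sub_mean_sq
          (hC.image o)
        rwa [Finset.card_image_of_injOn hinj, Finset.sum_image hinj, Finset.sum_image hinj] at this

namespace Finset

variable {α β γ : Type*}

theorem exists_refinement_card_image_eq [DecidableEq α] [DecidableEq β] (F : Finset α)
    (c : α → β) {k : ℕ} (hk₁ : #(F.image c) ≤ k) (hk₂ : k ≤ #F) :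
    ∃ c' : α → β ⊕ α, #(F.image c') = k ∧ ∀ x ∈ F, ∀ y ∈ F, c' x = c' y → c x = c y := by
  -- `R` holds one point of each fibre of `c`; `k - #(F.image c)` points outside `R` get their
  -- own labels.
  obtain ⟨R, hRF, hRinj, hRimg⟩ := exists_subset_injOn_image_eq_of_surjOn (f := c)
    (F : Set α) (F.image c) (by simp [Set.SurjOn])
  have hR : #R = #(F.image c) := by rw [← hRimg, card_image_of_injOn hRinj]
  obtain ⟨T, hT, hTcard⟩ := exists_subset_card_eq (s := F \ R) (n := k - #(F.image c))
    (by rw [card_sdiff_of_subset (coe_subset.mp hRF)]; omega)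
  set c' : α → β ⊕ α := fun x => if x ∈ T then .inr x else .inl (c x)
  have himage : F.image c' = (F.image c).disjSum T := by
    ext (b | t)
    · simp only [mem_image, inl_mem_disjSum]
      constructor
      · rintro ⟨x, hx, hxb⟩
        by_cases hxT : x ∈ T <;> simp only [c', hxT, if_true, if_false, reduceCtorEq,
          Sum.inl.injEq] at hxb
        exact ⟨x, hx, hxb⟩
      · rintro ⟨x, hx, rfl⟩
        obtain ⟨y, hy, hyx⟩ := mem_image.mp (hRimg ▸ mem_image_of_mem c hx)
        have hyT : y ∉ T := fun h => (mem_sdiff.mp (hT h)).2 hy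
        exact ⟨y, hRF hy, by simp [c', hyT, hyx]⟩
    · simp only [mem_image, inr_mem_disjSum]
      constructor
      · rintro ⟨x, hx, hxt⟩
        by_cases hxT : x ∈ T <;> simp only [c', hxT, if_true, if_false, reduceCtorEq,
          Sum.inr.injEq] at hxt
        exact hxt ▸ hxT
      · intro ht
        exact ⟨t, (mem_sdiff.mp (hT ht)).1, by simp [c', ht]⟩
  refine ⟨c', by rw [himage, card_disjSum]; omega, fun x _ y _ hxy => ?_⟩
  by_cases hx : x ∈ T <;> by_cases hy : y ∈ T <;> simp_all [c']

theorem exists_fin_partition_of_card_image_eq [DecidableEq γ] (F : Finset α) (c : α → γ) {k : ℕ}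
    (hk : #(F.image c) = k) :
    ∃ P : Fin k → Finset α, (∀ i, (P i).Nonempty) ∧ Pairwise (fun i j => Disjoint (P i) (P j)) ∧
      (∀ x, x ∈ F ↔ ∃ i, x ∈ P i) ∧ ∀ i, ∀ x ∈ P i, ∀ y ∈ P i, c x = c y := by
  let e := (F.image c).equivFinOfCardEq hk
  refine ⟨fun i => F.filter (c · = e.symm i), fun i => ?_, fun i j hij => ?_, fun x => ?_, ?_⟩
  · obtain ⟨x, hx, hxi⟩ := mem_image.mp (e.symm i).2
    exact ⟨x, mem_filter.mpr ⟨hx, hxi⟩⟩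
  · refine disjoint_filter.mpr fun x _ hxi hxj => hij (e.symm.injective (Subtype.ext ?_))
    rw [← hxi, ← hxj]
  · refine ⟨fun hx => ⟨e ⟨c x, mem_image_of_mem c hx⟩, ?_⟩, fun ⟨i, hi⟩ => (mem_filter.mp hi).1⟩
    simp [hx]
  · intro i x hx y hy
    rw [(mem_filter.mp hx).2, (mem_filter.mp hy).2]

end Finset

theorem SimpleGraph.exists_star_partition {W : Type*} [DecidableEq W] (H : SimpleGraph W)
    [Fintype H.edgeSet] {C : Finset W} (hC : _root_.IsVertexCover H C) {k : ℕ} (hk₁ : #C ≤ k)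
    (hk₂ : k ≤ #H.edgeFinset) :
    ∃ P : Fin k → Finset (Sym2 W), (∀ i, (P i).Nonempty) ∧
      Pairwise (fun i j => Disjoint (P i) (P j)) ∧ (∀ e, e ∈ H.edgeSet ↔ ∃ i, e ∈ P i) ∧
      ∀ i, ∃ v, ∀ e ∈ P i, v ∈ e := by
  classical
  let c : Sym2 W → Option W := fun e => if h : ∃ v ∈ C, v ∈ e then some h.choose else none
  have hc : ∀ e ∈ H.edgeFinset, ∃ v ∈ C, c e = some v ∧ v ∈ e := by
    intro e he
    have h : ∃ v ∈ C, v ∈ e := by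
      induction e using Sym2.ind with
      | _ x y =>
        rcases hC (mem_edgeFinset.mp he) with hx | hy
        · exact ⟨x, hx, Sym2.mem_mk_left x y⟩
        · exact ⟨y, hy, Sym2.mem_mk_right x y⟩
    exact ⟨h.choose, h.choose_spec.1, dif_pos h, h.choose_spec.2⟩
  have himage : #(H.edgeFinset.image c) ≤ #C := by
    refine (card_le_card fun o ho => ?_).trans (card_image_le (f := some))
    obtain ⟨e, he, rfl⟩ := mem_image.mp ho
    obtain ⟨v, hv, hcv, -⟩ := hc e he
    exact hcv ▸ mem_image_of_mem some hv
  obtain ⟨c', hc'card, hc'⟩ := exists_refinement_card_image_eq _ c (himage.trans hk₁) hk₂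
  obtain ⟨P, hne, hdisj, hcover, hfib⟩ := exists_fin_partition_of_card_image_eq _ c' hc'card
  have hPE : ∀ i, ∀ e ∈ P i, e ∈ H.edgeFinset := fun i e he => (hcover e).mpr ⟨i, he⟩
  refine ⟨P, hne, hdisj, fun e => by rw [← mem_edgeFinset, hcover], fun i => ?_⟩
  obtain ⟨e₀, he₀⟩ := hne i
  obtain ⟨v, -, hv, -⟩ := hc e₀ (hPE i e₀ he₀)
  refine ⟨v, fun e he => ?_⟩
  obtain ⟨w, -, hw, hwe⟩ := hc e (hPE i e he)
  have hce : c e = c e₀ := hc' e (hPE i e he) e₀ (hPE i e₀ he₀) (hfib i e he e₀ he₀)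
  rw [hw, hv, Option.some_inj] at hce
  exact hce ▸ hwe

theorem SimpleGraph.exists_partition_sum_cost_le {N : ℕ} (H : SimpleGraph (Fin N))
    [Fintype H.edgeSet] {C : Finset (Fin N)} (hC : _root_.IsVertexCover H C) {k : ℕ}
    (hk₁ : #C ≤ k) (hk₂ : k ≤ #H.edgeFinset) :
    ∃ P : Fin k → Finset (Sym2 (Fin N)), (∀ i, (P i).Nonempty) ∧
      Pairwise (fun i j => Disjoint (P i) (P j)) ∧ (∀ e, e ∈ H.edgeSet ↔ ∃ i, e ∈ P i) ∧
      ∑ i, cost N (P i) ≤ #H.edgeFinset - k := by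
  obtain ⟨P, hne, hdisj, hcover, hstar⟩ := H.exists_star_partition hC hk₁ hk₂
  have hE : H.edgeFinset = univ.biUnion P := by ext e; simp [hcover]
  refine ⟨P, hne, hdisj, hcover, ?_⟩
  calc ∑ i, cost N (P i) ≤ ∑ i, ((#(P i) : ℝ) - 1) := sum_le_sum fun i _ =>
        have ⟨v, hv⟩ := hstar i
        cost_le_card_sub_one (hne i) hv
    _ = #H.edgeFinset - k := by
        rw [hE, card_biUnion fun i _ j _ hij => hdisj hij]
        simp

theorem IsVertexCover.image_iso {V W : Type*} {G : SimpleGraph V} {H : SimpleGraph W}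
    (φ : G ≃g H) {c : Set V} (hc : _root_.IsVertexCover G c) :
    _root_.IsVertexCover H (φ '' c) := fun v w hadj =>
  (hc (φ.symm.map_adj_iff.mpr hadj)).imp (fun h => ⟨_, h, φ.apply_symm_apply v⟩)
    (fun h => ⟨_, h, φ.apply_symm_apply w⟩)

theorem Sym2.out_mk_eq_or {α : Type*} (x y : α) :
    s(x, y).out = (x, y) ∨ s(x, y).out = (y, x) := by
  have h : s(s(x, y).out.1, s(x, y).out.2) = s(x, y) := Quot.out_eq _
  rcases Sym2.eq_iff.mp h with ⟨h1, h2⟩ | ⟨h1, h2⟩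
  · exact Or.inl (Prod.ext h1 h2)
  · exact Or.inr (Prod.ext h1 h2)

section Subdivide

variable {V : Type*} [DecidableEq V]

def NewVert.swap {E1 : Finset (Sym2 V)} (p : NewVert V E1) : NewVert V E1 :=
  ⟨p.val.swap, by rw [Prod.fst_swap, Prod.snd_swap, Sym2.eq_swap]; exact p.prop.1,
    p.prop.2.symm⟩

noncomputable def orient (S : Finset V) (e : Sym2 V) : V × V :=
  if e.out.2 ∈ S then e.out else e.out.swap

theorem orient_mk_eq_or (S : Finset V) (x y : V) :
    orient S s(x, y) = (x, y) ∨ orient S s(x, y) = (y, x) := by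
  unfold orient
  rcases Sym2.out_mk_eq_or x y with h | h <;> rw [h] <;> split_ifs <;> simp

theorem orient_mk_of_notMem_of_mem {S : Finset V} {x y : V} (hx : x ∉ S) (hy : y ∈ S) :
    orient S s(x, y) = (x, y) := by
  unfold orient
  rcases Sym2.out_mk_eq_or x y with h | h <;> rw [h] <;> simp [hx, hy]

noncomputable def orientedNewVert (S : Finset V) (E1 : Finset (Sym2 V)) :
    Finset (NewVert V E1) :=
  (E1.image (orient S)).subtype _

variable {S : Finset V} {E1 : Finset (Sym2 V)}

theorem card_orientedNewVert_le : #(orientedNewVert S E1) ≤ #E1 := by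
  rw [orientedNewVert, card_subtype]
  exact (card_filter_le _ _).trans card_image_le

theorem mem_orientedNewVert_of_notMem_of_mem {p : NewVert V E1} (h1 : p.val.1 ∉ S)
    (h2 : p.val.2 ∈ S) : p ∈ orientedNewVert S E1 :=
  mem_subtype.mpr (mem_image.mpr ⟨_, p.prop.1, orient_mk_of_notMem_of_mem h1 h2⟩)

theorem mem_or_swap_mem_orientedNewVert (p : NewVert V E1) :
    p ∈ orientedNewVert S E1 ∨ p.swap ∈ orientedNewVert S E1 := by
  simp only [orientedNewVert, mem_subtype, mem_image]
  rcases orient_mk_eq_or S p.val.1 p.val.2 with h | h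
  · exact Or.inl ⟨_, p.prop.1, h⟩
  · exact Or.inr ⟨_, p.prop.1, h⟩

theorem IsVertexCover.subdivide {G : SimpleGraph V} (hE1 : (E1 : Set (Sym2 V)) ⊆ G.edgeSet)
    (hS : _root_.IsVertexCover G S) :
    _root_.IsVertexCover (subdivide G E1) ↑(S.disjSum (orientedNewVert S E1)) := by
  have hleg : ∀ p : NewVert V E1, p.val.1 ∈ S ∨ p ∈ orientedNewVert S E1 := fun p =>
    (em _).imp_right fun h1 => mem_orientedNewVert_of_notMem_of_mem h1
      ((hS (G.mem_edgeSet.mp (hE1 p.prop.1))).resolve_left h1)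
  rintro (u | p) (w | q) hadj <;> simp only [mem_coe, inl_mem_disjSum, inr_mem_disjSum]
  · exact hS hadj.1
  · exact (hadj : u = q.val.1) ▸ hleg q
  · exact ((hadj : w = p.val.1) ▸ hleg p).symm
  · obtain rfl : q = p.swap := Subtype.ext (Prod.ext hadj.2.symm hadj.1.symm)
    exact mem_or_swap_mem_orientedNewVert p

variable [Fintype V]

theorem card_newVert (hE1 : ∀ e ∈ E1, ¬e.IsDiag) : Fintype.card (NewVert V E1) = 2 * #E1 := by
  classical
  let D := SimpleGraph.fromEdgeSet (E1 : Set (Sym2 V))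
  let darts : NewVert V E1 ≃ D.Dart :=
    { toFun p := ⟨p.val, by simpa [D] using p.prop⟩
      invFun d := ⟨d.toProd, by simpa [D] using d.adj⟩
      left_inv _ := rfl
      right_inv _ := rfl }
  have hD : D.edgeFinset = E1 := by
    ext e
    simp only [D, mem_edgeFinset, edgeSet_fromEdgeSet, Set.mem_sdiff, mem_coe]
    exact ⟨fun h => h.1, fun h => ⟨h, hE1 e h⟩⟩
  rw [Fintype.card_congr darts, D.dart_card_eq_twice_card_edges]
  convert congrArg (2 * #·) hD

variable {G : SimpleGraph V} [Fintype (subdivide G E1).edgeSet]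

theorem two_mul_card_le_card_edgeFinset_subdivide (hE1 : (E1 : Set (Sym2 V)) ⊆ G.edgeSet) :
    2 * #E1 ≤ #(subdivide G E1).edgeFinset := by
  rw [← card_newVert fun e he => G.not_isDiag_of_mem_edgeSet (hE1 he), ← card_univ]
  refine card_le_card_of_injOn (fun p => s(.inl p.val.1, .inr p)) (fun p _ => ?_) ?_
  · exact (subdivide G E1).mem_edgeFinset.mpr rfl
  · intro p _ q _ h
    rcases Sym2.eq_iff.mp h with ⟨-, h⟩ | ⟨h, -⟩
    exacts [Sum.inr_injective h, absurd h Sum.inl_ne_inr]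

theorem card_edgeFinset_subdivide_le [DecidableRel G.Adj]
    (hE1 : (E1 : Set (Sym2 V)) ⊆ G.edgeSet) :
    #(subdivide G E1).edgeFinset ≤ #G.edgeFinset + 2 * #E1 := by
  let T := orientedNewVert ∅ E1
  have hsub : (subdivide G E1).edgeFinset ⊆
      ((G.edgeFinset \ E1).image (Sym2.map Sum.inl) ∪
        univ.image fun p : NewVert V E1 => s(.inl p.val.1, .inr p)) ∪
        T.image fun p => s(.inr p, .inr p.swap) := by
    intro f hf
    induction f using Sym2.ind with
    | _ x y =>
      rw [mem_edgeFinset, mem_edgeSet] at hf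
      simp only [mem_union, mem_image, mem_sdiff, mem_univ, true_and]
      rcases x with u | p <;> rcases y with w | q
      · exact .inl <| .inl ⟨s(u, w), ⟨G.mem_edgeFinset.mpr hf.1, hf.2⟩, rfl⟩
      · exact .inl <| .inr ⟨q, by rw [(hf : u = q.val.1)]⟩
      · exact .inl <| .inr ⟨p, by rw [(hf : w = p.val.1), Sym2.eq_swap]⟩
      · obtain rfl : q = p.swap := Subtype.ext (Prod.ext hf.2.symm hf.1.symm)
        rcases mem_or_swap_mem_orientedNewVert (S := ∅) p with hp | hp
        · exact .inr ⟨p, hp, rfl⟩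
        · exact .inr ⟨p.swap, hp, Sym2.eq_swap⟩
  have hE1G : E1 ⊆ G.edgeFinset := fun e he => G.mem_edgeFinset.mpr (hE1 he)
  calc #(subdivide G E1).edgeFinset
      ≤ (#(G.edgeFinset \ E1) + Fintype.card (NewVert V E1)) + #T :=
        (card_le_card hsub).trans <| (card_union_le _ _).trans <|
          add_le_add ((card_union_le _ _).trans (add_le_add card_image_le card_image_le))
            card_image_le
    _ ≤ #G.edgeFinset + 2 * #E1 := by
        rw [card_sdiff_of_subset hE1G,
          card_newVert fun e he => G.not_isDiag_of_mem_edgeSet (hE1 he)]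
        have := card_le_card hE1G
        have : #T ≤ #E1 := card_orientedNewVert_le
        omega

end Subdivide

theorem statement11_general {V : Type*} [Fintype V] [DecidableEq V] (G : SimpleGraph V)
    [DecidableRel G.Adj] (n : ℕ)
    (E1 E2 : Finset (Sym2 V))
    (hunion : E1 ∪ E2 = G.edgeFinset) (hE1 : E1.card = n) (hE2 : E2.card = n)
    (H : SimpleGraph (Fin (3 * n))) (φ : subdivide G E1 ≃g H)
    (s : ℕ) (hs : s ≤ n)
    (hcover : ∃ S : Finset V, _root_.IsVertexCover G ↑S ∧ S.card ≤ s) :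
    ∃ CC : Fin (s + n) → Finset (Sym2 (Fin (3 * n))),
      (∀ i, (CC i).Nonempty) ∧
      (∀ i j, i ≠ j → Disjoint (CC i) (CC j)) ∧
      (∀ e, e ∈ H.edgeSet ↔ ∃ i, e ∈ CC i) ∧
      ∑ i, cost (3 * n) (CC i) ≤ 3 * (n : ℝ) - s := by
  classical
  obtain ⟨S, hS, hScard⟩ := hcover
  have hE1G : (E1 : Set (Sym2 V)) ⊆ G.edgeSet := fun e he =>
    G.mem_edgeFinset.mp (hunion ▸ mem_union_left E2 he)
  have hG : #G.edgeFinset ≤ 2 * n := by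
    rw [← hunion]
    exact (card_union_le E1 E2).trans (by omega)
  have hC := (IsVertexCover.subdivide hE1G hS).image_iso φ
  rw [← coe_image] at hC
  have hCcard : #((S.disjSum (orientedNewVert S E1)).image φ) ≤ s + n := by
    have := card_orientedNewVert_le (S := S) (E1 := E1)
    exact card_image_le.trans (by rw [card_disjSum]; omega)
  have hH := φ.card_edgeFinset_eq
  have hlow := two_mul_card_le_card_edgeFinset_subdivide hE1G
  have hup := card_edgeFinset_subdivide_le hE1G
  obtain ⟨P, hne, hdisj, hcov, hcost⟩ := H.exists_partition_sum_cost_le hC hCcard (by omega)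
  refine ⟨P, hne, fun i j hij => hdisj hij, hcov, hcost.trans ?_⟩
  have : #H.edgeFinset ≤ 4 * n := by omega
  have : (#H.edgeFinset : ℝ) ≤ 4 * n := by exact_mod_cast this
  push_cast
  linarith

/-- completeness: Let `G` be a 4-regular graph on `n` vertices, with edge
set partitioned into `E1 ∪ E2`, `|E1| = |E2| = n`, such that `(V, E2)` is bipartite,
and let `G'` be obtained by subdividing each edge of `E1` twice; identify the vertices
of `G'` with `{1, …, 3n}` via a graph isomorphism `φ` to a graph `H` on `Fin (3n)`.
If `G` has a vertex cover of size at most `s ≤ n`, then with `k = s + n` the edge set of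
`H` admits a partition into `k` parts of total cost at most `3n − s`. -/
theorem statement11 {V : Type*} [Fintype V] [DecidableEq V] (G : SimpleGraph V)
    [DecidableRel G.Adj] (n : ℕ) (hn : Fintype.card V = n)
    (hreg : G.IsRegularOfDegree 4)
    (E1 E2 : Finset (Sym2 V)) (hdisj : Disjoint E1 E2)
    (hunion : E1 ∪ E2 = G.edgeFinset) (hE1 : E1.card = n) (hE2 : E2.card = n)
    (hbip : ∃ c : V → Bool, ∀ u v : V, s(u, v) ∈ E2 → c u ≠ c v)
    (H : SimpleGraph (Fin (3 * n))) (φ : subdivide G E1 ≃g H)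
    (s : ℕ) (hs : s ≤ n)
    (hcover : ∃ S : Finset V, _root_.IsVertexCover G ↑S ∧ S.card ≤ s) :
    ∃ CC : Fin (s + n) → Finset (Sym2 (Fin (3 * n))),
      (∀ i, (CC i).Nonempty) ∧
      (∀ i j, i ≠ j → Disjoint (CC i) (CC j)) ∧
      (∀ e, e ∈ H.edgeSet ↔ ∃ i, e ∈ CC i) ∧
      ∑ i, cost (3 * n) (CC i) ≤ 3 * (n : ℝ) - s :=
  statement11_general G n E1 E2 hunion hE1 hE2 H φ s hs hcover
end
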